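/- Let R be an exchange ring and A ∈ GL_n(R), with n ≥ 2. Then there exist matrices E, F ∈ E_n(R) such that the (1,1) entry d of EAF is a von Neumann regular element of R satisfying dR = (1 − p)R and Rd = R(1 − q) for some idempotents p, q ∈ R with RpR = RqR = R. -/

import Mathlib

universe u

/-- A unital ring `R` is an *exchange ring* if for every `a ∈ R` there exists an
idempotent `e ∈ aR` such that `1 - e ∈ (1 - a)R`. -/
def IsExchangeRing (R : Type*) [Ring R] : Prop :=
  ∀ a : R, ∃ e r s : R, IsIdempotentElem e ∧ e = a * r ∧ 1 - e = (1 - a) * s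

/-- `E_ι(R)`: the subgroup of `GL_ι(R) = (Matrix ι ι R)ˣ` generated by the elementary
matrices (transvections) `1 + r·e_{ij}`, `i ≠ j`. -/
def ElementarySubgroup (ι : Type*) [Fintype ι] [DecidableEq ι] (R : Type*) [Ring R] :
    Subgroup (Matrix ι ι R)ˣ :=
  Subgroup.closure
    {E : (Matrix ι ι R)ˣ | ∃ i j : ι, ∃ r : R, i ≠ j ∧ E.val = 1 + Matrix.single i j r}

/-!
If `M` is invertible, its `i`-th row is unimodular: `∑ⱼ Mᵢⱼ (M⁻¹)ⱼᵢ = 1`. Feeding `a (M⁻¹)ᵢᵢ`, with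
`a = Mᵢᵢ`, to the exchange property yields an idempotent `ε ∈ aR` with
`1 - ε ∈ (1 - a (M⁻¹)ᵢᵢ) R`, and adding multiples of the other columns to the `i`-th one replaces
the corner by `ε a`, a regular element of `aRa`. Once the corner `c` is regular, `c u c = c`, two
transvections through a second column replace it by `g c` with `c u g = 0`, and two through a
second row by `c g` with `g u c = 0`. Alternating these moves produces a corner `a` with
`e a = 0 = a f` and `a ∈ ReR ∩ RfR`. A final regularization gives a regular `d ∈ aRa`, and
`p = 1 - du`, `q = 1 - ud` do the job: `e = e p` and `du ∈ ReR`, so `1 = p + du ∈ RpR`;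
symmetrically for `q`.
-/

namespace TwoSidedIdeal

variable {R : Type*} [Ring R]

theorem mul_mul_mem_span_singleton (x e y : R) : x * e * y ∈ span {e} :=
  mul_mem_right _ _ _ (mul_mem_left _ _ _ (subset_span rfl))

theorem span_singleton_one_sub_eq_top {e x : R} (hx : x ∈ span {e}) (he : e ∈ span {1 - x}) :
    span {1 - x} = ⊤ := by
  have hx' : x ∈ span {1 - x} := span_le.2 (Set.singleton_subset_iff.2 he) hx
  have h1 := add_mem _ (subset_span (Set.mem_singleton (1 - x))) hx'
  rw [sub_add_cancel] at h1
  exact eq_top _ h1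

theorem span_singleton_one_sub_eq_top_of_mul_left_eq_zero {e x : R} (hx : x ∈ span {e})
    (hex : e * x = 0) : span {1 - x} = ⊤ :=
  span_singleton_one_sub_eq_top hx <| by
    simpa [mul_sub, hex] using mul_mem_left _ e _ (subset_span (Set.mem_singleton (1 - x)))

theorem span_singleton_one_sub_eq_top_of_mul_right_eq_zero {e x : R} (hx : x ∈ span {e})
    (hxe : x * e = 0) : span {1 - x} = ⊤ :=
  span_singleton_one_sub_eq_top hx <| by
    simpa [sub_mul, hxe] using mul_mem_right _ _ e (subset_span (Set.mem_singleton (1 - x)))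

end TwoSidedIdeal

section Regular

variable {R : Type*} [Ring R] {d u : R}

theorem Submodule.span_op_singleton_eq_span_op_singleton_mul (hd : d * u * d = d) :
    span Rᵐᵒᵖ {d} = span Rᵐᵒᵖ {d * u} := by
  apply le_antisymm <;> rw [span_singleton_le_iff_mem, mem_span_singleton]
  · exact ⟨MulOpposite.op d, by rw [op_smul_eq_mul, hd]⟩
  · exact ⟨MulOpposite.op u, op_smul_eq_mul _ _⟩

theorem Ideal.span_singleton_eq_span_singleton_mul (hd : d * u * d = d) :
    span {d} = span {u * d} := by
  apply le_antisymm <;> rw [span_singleton_le_iff_mem, mem_span_singleton']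
  · exact ⟨d, by rw [← mul_assoc, hd]⟩
  · exact ⟨u, rfl⟩

theorem exists_idempotents_of_mul_mul_eq_self {a w e f : R} (hd : d * u * d = d)
    (hda : d = a * w * a) (hae : a ∈ TwoSidedIdeal.span {e}) (hea : e * a = 0)
    (haf : a ∈ TwoSidedIdeal.span {f}) (hfa : a * f = 0) :
    ∃ p q : R, IsIdempotentElem p ∧ IsIdempotentElem q ∧
      Submodule.span Rᵐᵒᵖ ({d} : Set R) = Submodule.span Rᵐᵒᵖ ({1 - p} : Set R) ∧
      Ideal.span ({d} : Set R) = Ideal.span ({1 - q} : Set R) ∧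
      TwoSidedIdeal.span ({p} : Set R) = ⊤ ∧ TwoSidedIdeal.span ({q} : Set R) = ⊤ := by
  have hdu : d * u = a * (w * a * u) := by rw [hda]; noncomm_ring
  have hud : u * d = (u * a * w) * a := by rw [hda]; noncomm_ring
  refine ⟨1 - d * u, 1 - u * d, .one_sub ?_, .one_sub ?_, ?_, ?_, ?_, ?_⟩
  · rw [IsIdempotentElem, ← mul_assoc, hd]
  · rw [IsIdempotentElem, mul_assoc, ← mul_assoc d, hd]
  · rw [sub_sub_cancel]
    exact Submodule.span_op_singleton_eq_span_op_singleton_mul hd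
  · rw [sub_sub_cancel]
    exact Ideal.span_singleton_eq_span_singleton_mul hd
  · refine TwoSidedIdeal.span_singleton_one_sub_eq_top_of_mul_left_eq_zero
      (hdu ▸ TwoSidedIdeal.mul_mem_right _ _ _ hae) ?_
    rw [hdu, ← mul_assoc, hea, zero_mul]
  · refine TwoSidedIdeal.span_singleton_one_sub_eq_top_of_mul_right_eq_zero
      (hud ▸ TwoSidedIdeal.mul_mem_left _ _ _ haf) ?_
    rw [hud, mul_assoc, hfa, mul_zero]

end Regular

namespace ElementarySubgroup

open Matrix

variable {ι : Type*} [Fintype ι] [DecidableEq ι] {R : Type*} [Ring R]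

-- Mathlib's `Matrix.transvection` is only available over commutative rings.
def transvection (i j : ι) (hij : i ≠ j) (c : R) : (Matrix ι ι R)ˣ where
  val := 1 + single i j c
  inv := 1 + single i j (-c)
  val_inv := by
    simp [add_mul, mul_add, single_mul_single_of_ne _ i j i hij.symm, add_assoc, ← single_add]
  inv_val := by
    simp [add_mul, mul_add, single_mul_single_of_ne _ i j i hij.symm, add_assoc, ← single_add]

theorem transvection_mem (i j : ι) (hij : i ≠ j) (c : R) :
    transvection i j hij c ∈ ElementarySubgroup ι R :=
  Subgroup.subset_closure ⟨i, j, c, hij, rfl⟩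

theorem mul_transvection_apply (M : Matrix ι ι R) {i j : ι} (hij : i ≠ j) (c : R) (k l : ι) :
    (M * (transvection i j hij c).val) k l = M k l + if l = j then M k i * c else 0 := by
  rw [transvection, mul_add, mul_one, Matrix.add_apply]
  split_ifs with h
  · rw [h, mul_single_apply_same]
  · rw [mul_single_apply_of_ne _ _ _ _ _ h]

theorem transvection_mul_apply (M : Matrix ι ι R) {i j : ι} (hij : i ≠ j) (c : R) (k l : ι) :
    ((transvection i j hij c).val * M) k l = M k l + if k = i then c * M j l else 0 := by
  rw [transvection, add_mul, one_mul, Matrix.add_apply]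
  split_ifs with h
  · rw [h, single_mul_apply_same]
  · rw [single_mul_apply_of_ne _ _ _ _ _ h]

theorem exists_val_eq_one_add_sum_single (i : ι) (c : ι → R) (s : Finset ι) (hs : i ∉ s) :
    ∃ U ∈ ElementarySubgroup ι R, U.val = 1 + ∑ j ∈ s, single j i (c j) := by
  induction s using Finset.induction_on with
  | empty => exact ⟨1, one_mem _, by simp⟩
  | @insert j s hj ih =>
    have hji : j ≠ i := fun h => hs (h ▸ Finset.mem_insert_self j s)
    obtain ⟨U, hU, hUval⟩ := ih (fun h => hs (Finset.mem_insert_of_mem h))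
    refine ⟨U * transvection j i hji (c j), mul_mem hU (transvection_mem _ _ _ _), ?_⟩
    have hkill : (∑ k ∈ s, single k i (c k)) * single j i (c j) = 0 := by
      rw [Finset.sum_mul]
      exact Finset.sum_eq_zero fun k _ => single_mul_single_of_ne _ k i j hji.symm _
    rw [Units.val_mul, hUval, transvection, Finset.sum_insert hj, mul_add, mul_one, add_mul,
      one_mul, hkill, add_zero]
    abel

theorem exists_mul_apply_eq_add_sum (M : Matrix ι ι R) (i : ι) (c : ι → R) (s : Finset ι)
    (hs : i ∉ s) :
    ∃ U ∈ ElementarySubgroup ι R, (M * U.val) i i = M i i + ∑ j ∈ s, M i j * c j := by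
  obtain ⟨U, hU, hUval⟩ := exists_val_eq_one_add_sum_single i c s hs
  refine ⟨U, hU, ?_⟩
  simp only [hUval, mul_add, mul_one, Matrix.add_apply, Matrix.mul_sum, Matrix.sum_apply,
    mul_single_apply_same]

theorem exists_mul_apply_regular (hR : IsExchangeRing R) (M : (Matrix ι ι R)ˣ) (i : ι) :
    ∃ F ∈ ElementarySubgroup ι R, ∃ u w : R,
      (M * F).val i i * u * (M * F).val i i = (M * F).val i i ∧
        (M * F).val i i = M.val i i * w * M.val i i := by
  set a := M.val i i
  set t := (M⁻¹).val i i
  have hrow : ∑ j, M.val i j * (M⁻¹).val j i = 1 := by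
    simpa [Matrix.mul_apply] using congrFun (congrFun M.mul_inv i) i
  obtain ⟨ε, r, s, hε, hεr, hεs⟩ := hR (a * t)
  obtain ⟨F, hF, hFii⟩ := exists_mul_apply_eq_add_sum M.val i
    (fun j => (M⁻¹).val j i * (s * -a)) (Finset.univ.erase i) (Finset.notMem_erase i _)
  have hsum : ∑ j ∈ Finset.univ.erase i, M.val i j * ((M⁻¹).val j i * (s * -a))
      = (1 - a * t) * s * -a := by
    simp_rw [← mul_assoc]
    rw [← Finset.sum_mul, ← Finset.sum_mul, Finset.sum_erase_eq_sub (Finset.mem_univ i), hrow]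
  have hcorner : (M * F).val i i = ε * a := by
    rw [Units.val_mul, hFii, hsum, ← hεs]
    noncomm_ring
  refine ⟨F, hF, t * r * ε, t * r, ?_, ?_⟩
  · rw [hcorner]
    calc ε * a * (t * r * ε) * (ε * a) = ε * (a * t * r) * ε * ε * a := by noncomm_ring
      _ = ε * a := by rw [← hεr, hε.eq, hε.eq, hε.eq]
  · rw [hcorner, hεr]
    noncomm_ring

theorem exists_mul_apply_eq_mul_left {i j : ι} (hij : i ≠ j) (M : (Matrix ι ι R)ˣ) {u : R}
    (hu : M.val i i * u * M.val i i = M.val i i) :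
    ∃ F ∈ ElementarySubgroup ι R, ∃ g : R,
      M.val i i * u * g = 0 ∧ (M * F).val i i = g * M.val i i := by
  set a := M.val i i
  set b := M.val i j
  -- The first transvection turns `b` into `b' = b + a u (1 - b)`, which satisfies `a u b' = a u`;
  -- the second one then replaces the corner by `a - b' a`.
  refine ⟨transvection i j hij (u * (1 - b)) * transvection j i hij.symm (-a),
    mul_mem (transvection_mem _ _ _ _) (transvection_mem _ _ _ _),
    1 - (b + a * (u * (1 - b))), ?_, ?_⟩
  · calc a * u * (1 - (b + a * (u * (1 - b))))
        = a * u - a * u * b - (a * u * a) * u * (1 - b) := by noncomm_ring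
      _ = 0 := by rw [hu]; noncomm_ring
  · rw [← mul_assoc, Units.val_mul, Units.val_mul]
    simp only [mul_transvection_apply, if_true, if_neg hij, add_zero]
    noncomm_ring

theorem exists_mul_apply_eq_mul_right {i j : ι} (hij : i ≠ j) (M : (Matrix ι ι R)ˣ) {u : R}
    (hu : M.val i i * u * M.val i i = M.val i i) :
    ∃ E ∈ ElementarySubgroup ι R, ∃ g : R,
      g * (u * M.val i i) = 0 ∧ (E * M).val i i = M.val i i * g := by
  set a := M.val i i
  set c := M.val j i
  refine ⟨transvection i j hij (-a) * transvection j i hij.symm ((1 - c) * u),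
    mul_mem (transvection_mem _ _ _ _) (transvection_mem _ _ _ _),
    1 - (c + (1 - c) * u * a), ?_, ?_⟩
  · calc (1 - (c + (1 - c) * u * a)) * (u * a)
        = u * a - c * u * a - (1 - c) * u * (a * u * a) := by noncomm_ring
      _ = 0 := by rw [hu]; noncomm_ring
  · rw [mul_assoc, Units.val_mul, Units.val_mul]
    simp only [transvection_mul_apply, if_true, if_neg hij, add_zero]
    noncomm_ring

theorem exists_corner_annihilated_mem_span (hR : IsExchangeRing R) (A : (Matrix ι ι R)ˣ)
    {i j : ι} (hij : i ≠ j) :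
    ∃ E ∈ ElementarySubgroup ι R, ∃ F ∈ ElementarySubgroup ι R, ∃ e f : R,
      (E * A * F).val i i ∈ TwoSidedIdeal.span {e} ∧ e * (E * A * F).val i i = 0 ∧
      (E * A * F).val i i ∈ TwoSidedIdeal.span {f} ∧ (E * A * F).val i i * f = 0 := by
  obtain ⟨F₁, hF₁, u₁, -, ha, -⟩ := exists_mul_apply_regular hR A i
  obtain ⟨F₂, hF₂, g₁, hg₁, ha₂⟩ := exists_mul_apply_eq_mul_left hij (A * F₁) ha
  obtain ⟨F₃, hF₃, u₃, w₃, ha₃, ha₃_eq⟩ := exists_mul_apply_regular hR (A * F₁ * F₂) i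
  obtain ⟨E, hE, g₂, hg₂, ha₄⟩ := exists_mul_apply_eq_mul_right hij (A * F₁ * F₂ * F₃) ha₃
  have hEAF : E * A * (F₁ * F₂ * F₃) = E * (A * F₁ * F₂ * F₃) := by simp only [mul_assoc]
  set a := (A * F₁).val i i
  set a₃ := (A * F₁ * F₂ * F₃).val i i
  rw [ha₂] at ha₃_eq
  refine ⟨E, hE, F₁ * F₂ * F₃, mul_mem (mul_mem hF₁ hF₂) hF₃, a * u₁, u₃ * a₃, ?_⟩
  rw [hEAF, ha₄]
  refine ⟨?_, ?_, ?_, ?_⟩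
  · have h : a₃ * g₂ = g₁ * (a * u₁) * (a * w₃ * (g₁ * a) * g₂) := by
      rw [ha₃_eq]
      nth_rewrite 1 [← ha]
      noncomm_ring
    rw [h]
    exact TwoSidedIdeal.mul_mul_mem_span_singleton _ _ _
  · calc a * u₁ * (a₃ * g₂) = (a * u₁ * g₁) * (a * w₃ * (g₁ * a) * g₂) := by
          rw [ha₃_eq]; noncomm_ring
      _ = 0 := by rw [hg₁, zero_mul]
  · have h : a₃ * g₂ = a₃ * (u₃ * a₃) * g₂ := by rw [← mul_assoc a₃, ha₃]
    rw [h]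
    exact TwoSidedIdeal.mul_mul_mem_span_singleton _ _ _
  · rw [mul_assoc, hg₂, mul_zero]

end ElementarySubgroup

/-- `dR = (1-p)R` is an equality of right ideals (`Submodule.span Rᵐᵒᵖ`),
`Rd = R(1-q)` an equality of left ideals (`Ideal.span`), and `RpR = RqR = R` is
expressed via `TwoSidedIdeal.span`. -/
theorem stmt6 (R : Type u) [Ring R] (hR : IsExchangeRing R) (n : ℕ) (hn : 2 ≤ n)
    (A : (Matrix (Fin n) (Fin n) R)ˣ) :
    ∃ E F : (Matrix (Fin n) (Fin n) R)ˣ,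
      E ∈ ElementarySubgroup (Fin n) R ∧ F ∈ ElementarySubgroup (Fin n) R ∧
      ∃ d : R, d = (E.val * A.val * F.val) ⟨0, by omega⟩ ⟨0, by omega⟩ ∧
        (∃ y : R, d * y * d = d) ∧
        ∃ p q : R, IsIdempotentElem p ∧ IsIdempotentElem q ∧
          Submodule.span Rᵐᵒᵖ ({d} : Set R) = Submodule.span Rᵐᵒᵖ ({1 - p} : Set R) ∧
          Ideal.span ({d} : Set R) = Ideal.span ({1 - q} : Set R) ∧
          TwoSidedIdeal.span ({p} : Set R) = ⊤ ∧ TwoSidedIdeal.span ({q} : Set R) = ⊤ := by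
  obtain ⟨E, hE, F, hF, e, f, hae, hea, haf, hfa⟩ :=
    ElementarySubgroup.exists_corner_annihilated_mem_span hR A (i := ⟨0, by omega⟩)
      (j := ⟨1, by omega⟩) (by simp [Fin.ext_iff])
  obtain ⟨F', hF', u, w, hd, hda⟩ :=
    ElementarySubgroup.exists_mul_apply_regular hR (E * A * F) ⟨0, by omega⟩
  refine ⟨E, F * F', hE, mul_mem hF hF', _, ?_, ⟨u, hd⟩,
    exists_idempotents_of_mul_mul_eq_self hd hda hae hea haf hfa⟩
  simp only [← mul_assoc, Units.val_mul]
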